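/- For two continuous functions γ₁, γ₂ : S^n → ℝ₊, the Wulff shapes satisfy W_{γ₁} = W_{γ₂} if and only if the boundaries of the convex hulls of inv(graph(γ₁)) and inv(graph(γ₂)) coincide, i.e. Γ_{γ₁} = Γ_{γ₂}. -/

import Mathlib

open scoped RealInnerProductSpace

noncomputable def sphereInv {n : ℕ} (x : EuclideanSpace ℝ (Fin (n+1))) :
    EuclideanSpace ℝ (Fin (n+1)) := -((‖x‖^2)⁻¹ • x)

noncomputable def graphSet {n : ℕ} (γ : EuclideanSpace ℝ (Fin (n+1)) → ℝ) :
    Set (EuclideanSpace ℝ (Fin (n+1))) :=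
  (fun θ => γ θ • θ) '' Metric.sphere 0 1

noncomputable def Wulff {n : ℕ} (γ : EuclideanSpace ℝ (Fin (n+1)) → ℝ) :
    Set (EuclideanSpace ℝ (Fin (n+1))) :=
  ⋂ θ ∈ Metric.sphere (0 : EuclideanSpace ℝ (Fin (n+1))) 1,
    {x | ⟪x, θ⟫ ≤ γ θ}

/-!
Writing `S_γ = inv(graph γ) = {-θ / γ(θ)}`, the inequalities `⟪x, θ⟫ ≤ γ(θ)` defining the Wulff
shape say exactly that `⟪x, y⟫ ≥ -1` for all `y ∈ S_γ`: `W_γ` is the polar of `-S_γ`. Since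
`0 ∈ conv S_γ`, the bipolar theorem recovers the closed convex hull `K_γ` of `S_γ` from `W_γ`,
so `W_γ` and `K_γ` determine each other. By Krein–Milman the compact convex set `K_γ` is the
closed convex hull of its extreme points, which lie on its boundary, so `K_γ` is determined by
its boundary. In finite dimensions a convex set and its closure have the same boundary, so the
boundary of `K_γ` is `Γ_γ`.
-/

section Convexity

variable {V : Type*} [NormedAddCommGroup V] [NormedSpace ℝ V] [FiniteDimensional ℝ V]

theorem Convex.interior_closure_eq_interior {s : Set V} (hs : Convex ℝ s) :
    interior (closure s) = interior s := by
  rcases (interior s).eq_empty_or_nonempty with h | h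
  · rw [h, ← Set.not_nonempty_iff_eq_empty, hs.closure.interior_nonempty_iff_affineSpan_eq_top]
    intro htop
    have hspan : affineSpan ℝ s = ⊤ := by
      refine eq_top_iff.mpr (htop ▸ affineSpan_le.mpr ?_)
      exact closure_minimal (subset_affineSpan ℝ s) (AffineSubspace.closed_of_finiteDimensional _)
    exact (hs.interior_nonempty_iff_affineSpan_eq_top.mpr hspan).ne_empty h
  · exact hs.interior_closure_eq_interior_of_nonempty_interior h

theorem Convex.frontier_closure {s : Set V} (hs : Convex ℝ s) :
    frontier (closure s) = frontier s := by
  rw [frontier, frontier, closure_closure, hs.interior_closure_eq_interior]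

end Convexity

section KreinMilman

variable {E : Type*} [AddCommGroup E] [Module ℝ E] [TopologicalSpace E]
  [IsTopologicalAddGroup E] [ContinuousSMul ℝ E] [Nontrivial E]

theorem extremePoints_subset_frontier (s : Set E) : s.extremePoints ℝ ⊆ frontier s :=
  fun _ hx =>
    ⟨subset_closure hx.1, Set.disjoint_right.mp (disjoint_interior_extremePoints s) hx⟩

theorem IsCompact.subset_of_frontier_subset [T2Space E] [LocallyConvexSpace ℝ E] {K L : Set E}
    (hK : IsCompact K) (hKconv : Convex ℝ K) (hL : IsClosed L) (hLconv : Convex ℝ L)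
    (h : frontier K ⊆ L) : K ⊆ L :=
  calc K = closure (convexHull ℝ (K.extremePoints ℝ)) :=
        (closure_convexHull_extremePoints hK hKconv).symm
    _ ⊆ L := closure_minimal
        (convexHull_min ((extremePoints_subset_frontier K).trans h) hLconv) hL

theorem IsCompact.eq_of_frontier_eq [T2Space E] [LocallyConvexSpace ℝ E] {K L : Set E}
    (hK : IsCompact K) (hKconv : Convex ℝ K) (hL : IsCompact L) (hLconv : Convex ℝ L)
    (h : frontier K = frontier L) : K = L :=
  (hK.subset_of_frontier_subset hKconv hL.isClosed hLconv
      (h ▸ hL.isClosed.frontier_subset)).antisymm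
    (hL.subset_of_frontier_subset hLconv hK.isClosed hKconv (h ▸ hK.isClosed.frontier_subset))

end KreinMilman

section Polar

variable {F : Type*} [NormedAddCommGroup F] [InnerProductSpace ℝ F]

/-- The polar of `-s`, the normalization in which `Wulff γ` is the polar of `inv(graph γ)`. -/
def innerPolar (s : Set F) : Set F := {x | ∀ y ∈ s, -1 ≤ ⟪x, y⟫}

theorem innerPolar_closure_convexHull (s : Set F) :
    innerPolar (closure (convexHull ℝ s)) = innerPolar s := by
  refine subset_antisymm (fun x hx y hy => hx y (subset_closure (subset_convexHull ℝ s hy)))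
    fun x hx => ?_
  have hclosed : IsClosed {y : F | -1 ≤ ⟪x, y⟫} :=
    isClosed_le continuous_const (continuous_const.inner continuous_id)
  have hconv : Convex ℝ {y : F | -1 ≤ ⟪x, y⟫} :=
    convex_halfSpace_ge (innerₛₗ ℝ x).isLinear (-1)
  exact closure_minimal (convexHull_min hx hconv) hclosed

theorem innerPolar_innerPolar [CompleteSpace F] {C : Set F} (hconv : Convex ℝ C)
    (hclosed : IsClosed C) (hzero : 0 ∈ C) : innerPolar (innerPolar C) = C := by
  refine subset_antisymm (fun y hy => ?_) fun y hy x hx => real_inner_comm x y ▸ hx y hy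
  by_contra hyC
  obtain ⟨f, u, hfC, hfy⟩ := geometric_hahn_banach_closed_point hconv hclosed hyC
  have hu : 0 < u := by simpa using hfC 0 hzero
  set v := (InnerProductSpace.toDual ℝ F).symm f
  -- the separating functional, rescaled so that `C` lies in the half-space `-1 ≤ ⟪x, ·⟫`
  have hx : -(u⁻¹ • v) ∈ innerPolar C := by
    intro a ha
    rw [inner_neg_left, real_inner_smul_left, InnerProductSpace.toDual_symm_apply,
      neg_le_neg_iff, inv_mul_le_one₀ hu]
    exact (hfC a ha).le
  have hyx := hy _ hx
  rw [real_inner_comm, inner_neg_left, real_inner_smul_left,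
    InnerProductSpace.toDual_symm_apply, neg_le_neg_iff, inv_mul_le_one₀ hu] at hyx
  exact hyx.not_gt hfy

end Polar

section InvertedGraph

variable {n : ℕ} {γ : EuclideanSpace ℝ (Fin (n+1)) → ℝ}

theorem image_sphereInv_graphSet
    (hpos : ∀ θ ∈ Metric.sphere (0 : EuclideanSpace ℝ (Fin (n+1))) 1, 0 < γ θ) :
    sphereInv '' graphSet γ = (fun θ => -((γ θ)⁻¹ • θ)) '' Metric.sphere 0 1 := by
  rw [graphSet, Set.image_image]
  refine Set.image_congr fun θ hθ => ?_
  rw [sphereInv, norm_smul, mem_sphere_zero_iff_norm.mp hθ, mul_one, Real.norm_eq_abs,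
    abs_of_pos (hpos θ hθ), smul_smul, sq, mul_inv, inv_mul_cancel_right₀ (hpos θ hθ).ne']

theorem Wulff_eq_innerPolar
    (hpos : ∀ θ ∈ Metric.sphere (0 : EuclideanSpace ℝ (Fin (n+1))) 1, 0 < γ θ) :
    Wulff γ = innerPolar (sphereInv '' graphSet γ) := by
  ext x
  simp only [Wulff, innerPolar, image_sphereInv_graphSet hpos, Set.forall_mem_image,
    Set.mem_iInter₂, Set.mem_ofPred_eq]
  refine forall₂_congr fun θ hθ => ?_
  rw [inner_neg_right, real_inner_smul_right, neg_le_neg_iff, inv_mul_le_one₀ (hpos θ hθ)]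

theorem isCompact_image_sphereInv_graphSet (hc : ContinuousOn γ (Metric.sphere 0 1))
    (hpos : ∀ θ ∈ Metric.sphere (0 : EuclideanSpace ℝ (Fin (n+1))) 1, 0 < γ θ) :
    IsCompact (sphereInv '' graphSet γ) := by
  rw [image_sphereInv_graphSet hpos]
  exact (isCompact_sphere 0 1).image_of_continuousOn
    ((hc.inv₀ fun θ hθ => (hpos θ hθ).ne').smul continuousOn_id).neg

theorem zero_mem_convexHull_image_sphereInv_graphSet
    (hpos : ∀ θ ∈ Metric.sphere (0 : EuclideanSpace ℝ (Fin (n+1))) 1, 0 < γ θ) :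
    0 ∈ convexHull ℝ (sphereInv '' graphSet γ) := by
  obtain ⟨θ, hθ⟩ : (Metric.sphere (0 : EuclideanSpace ℝ (Fin (n+1))) 1).Nonempty :=
    NormedSpace.sphere_nonempty.mpr zero_le_one
  have hθ' : -θ ∈ Metric.sphere (0 : EuclideanSpace ℝ (Fin (n+1))) 1 := by simpa using hθ
  rw [image_sphereInv_graphSet hpos]
  -- `0` lies between the points of the inverted graph in the directions `θ` and `-θ`
  refine segment_subset_convexHull (Set.mem_image_of_mem _ hθ) (Set.mem_image_of_mem _ hθ')
    (mem_segment_iff_sameRay.mpr ?_)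
  rw [zero_sub, neg_neg, sub_zero, smul_neg, neg_neg]
  exact sameRay_smul_smul_of_mul_nonneg (mul_pos (inv_pos.mpr (hpos θ hθ))
    (inv_pos.mpr (hpos (-θ) hθ'))).le

theorem Wulff_eq_innerPolar_closure_convexHull
    (hpos : ∀ θ ∈ Metric.sphere (0 : EuclideanSpace ℝ (Fin (n+1))) 1, 0 < γ θ) :
    Wulff γ = innerPolar (closure (convexHull ℝ (sphereInv '' graphSet γ))) := by
  rw [innerPolar_closure_convexHull, Wulff_eq_innerPolar hpos]

theorem innerPolar_Wulff
    (hpos : ∀ θ ∈ Metric.sphere (0 : EuclideanSpace ℝ (Fin (n+1))) 1, 0 < γ θ) :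
    innerPolar (Wulff γ) = closure (convexHull ℝ (sphereInv '' graphSet γ)) := by
  rw [Wulff_eq_innerPolar_closure_convexHull hpos]
  exact innerPolar_innerPolar (convex_convexHull ℝ _).closure isClosed_closure
    (subset_closure (zero_mem_convexHull_image_sphereInv_graphSet hpos))

theorem isCompact_closure_convexHull_image_sphereInv_graphSet
    (hc : ContinuousOn γ (Metric.sphere 0 1))
    (hpos : ∀ θ ∈ Metric.sphere (0 : EuclideanSpace ℝ (Fin (n+1))) 1, 0 < γ θ) :
    IsCompact (closure (convexHull ℝ (sphereInv '' graphSet γ))) :=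
  (isBounded_convexHull.mpr
    (isCompact_image_sphereInv_graphSet hc hpos).isBounded).isCompact_closure

end InvertedGraph

/-- For continuous positive `γ₁, γ₂` on `S^n`, `W_{γ₁} = W_{γ₂}` iff
`Γ_{γ₁} = Γ_{γ₂}`. -/
theorem stmt_11 {n : ℕ} (γ₁ γ₂ : EuclideanSpace ℝ (Fin (n+1)) → ℝ)
    (hc₁ : ContinuousOn γ₁ (Metric.sphere 0 1))
    (hc₂ : ContinuousOn γ₂ (Metric.sphere 0 1))
    (hpos₁ : ∀ θ ∈ Metric.sphere (0 : EuclideanSpace ℝ (Fin (n+1))) 1, 0 < γ₁ θ)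
    (hpos₂ : ∀ θ ∈ Metric.sphere (0 : EuclideanSpace ℝ (Fin (n+1))) 1, 0 < γ₂ θ) :
    Wulff γ₁ = Wulff γ₂ ↔
      frontier (convexHull ℝ (sphereInv '' graphSet γ₁)) =
        frontier (convexHull ℝ (sphereInv '' graphSet γ₂)) := by
  rw [← (convex_convexHull ℝ _).frontier_closure, ← (convex_convexHull ℝ _).frontier_closure]
  constructor
  · intro hW
    rw [← innerPolar_Wulff hpos₁, ← innerPolar_Wulff hpos₂, hW]
  · intro hΓ
    rw [Wulff_eq_innerPolar_closure_convexHull hpos₁,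
      Wulff_eq_innerPolar_closure_convexHull hpos₂,
      (isCompact_closure_convexHull_image_sphereInv_graphSet hc₁ hpos₁).eq_of_frontier_eq
        (convex_convexHull ℝ _).closure
        (isCompact_closure_convexHull_image_sphereInv_graphSet hc₂ hpos₂)
        (convex_convexHull ℝ _).closure hΓ]
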